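/- arXiv:1002.4925 — 2 statements merged into one kernel-verified Lean document; each statement's English description precedes it below -/
import Mathlib

section
/- Let f : ℝ → [0,∞) be a measurable, bounded function with ∫_ℝ (1 + v²) f(v) dv < ∞. Then (∫_ℝ f(v) dv)⁴ ≤ (2‖f‖_∞ + 1)³ ∫_ℝ∫_ℝ f(v) f(w) (v − w)² dv dw, where ‖f‖_∞ denotes the essential supremum of f. -/
open MeasureTheory

/-!
For every centre `w`, a density bounded by `C` of total mass `M` carries at most `2 R C` of its
mass within distance `R` of `w`, so its second moment about `w` is at least `R² (M - 2 R C)`;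
for `R = M / (2C + 1)` this is `(M / (2C + 1))³`. Integrating this lower bound against `f(w) dw`
bounds the interaction integral below by `M⁴ / (2C + 1)³`.
-/

lemma ae_norm_le_toReal_eLpNorm_top {α E : Type*} [MeasurableSpace α] {μ : Measure α}
    [NormedAddCommGroup E] {f : α → E} (hf : eLpNorm f ⊤ μ ≠ ⊤) :
    ∀ᵐ x ∂μ, ‖f x‖ ≤ (eLpNorm f ⊤ μ).toReal := by
  filter_upwards [enorm_ae_le_eLpNormEssSup f μ] with x hx
  rw [← eLpNorm_exponent_top] at hx
  simpa using ENNReal.toReal_mono hf hx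

section Moments

variable {f : ℝ → ℝ}

lemma integrable_of_integrable_one_add_sq_mul (hf : AEStronglyMeasurable f)
    (hmom : Integrable fun v => (1 + v ^ 2) * f v) : Integrable f :=
  hmom.mono hf <| .of_forall fun v => by
    rw [norm_mul, Real.norm_of_nonneg (by positivity : (0 : ℝ) ≤ 1 + v ^ 2)]
    nlinarith [norm_nonneg (f v), sq_nonneg v]

lemma sq_sub_le_two_mul_one_add_sq_mul_one_add_sq (v w : ℝ) :
    (v - w) ^ 2 ≤ 2 * ((1 + v ^ 2) * (1 + w ^ 2)) := by
  nlinarith [sq_nonneg (v + w), sq_nonneg (v * w)]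

lemma integrable_sq_sub_mul (hf : AEStronglyMeasurable f)
    (hmom : Integrable fun v => (1 + v ^ 2) * f v) (c : ℝ) :
    Integrable fun v => (v - c) ^ 2 * f v := by
  refine (hmom.const_mul (2 * (1 + c ^ 2))).mono (by fun_prop) <| .of_forall fun v => ?_
  have := sq_sub_le_two_mul_one_add_sq_mul_one_add_sq v c
  simp only [norm_mul, Real.norm_of_nonneg (sq_nonneg _),
    Real.norm_of_nonneg (by positivity : (0 : ℝ) ≤ 2 * (1 + c ^ 2)),
    Real.norm_of_nonneg (by positivity : (0 : ℝ) ≤ 1 + v ^ 2)]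
  nlinarith [norm_nonneg (f v)]

lemma integrable_mul_mul_sq_sub_prod (hf : AEStronglyMeasurable f)
    (hmom : Integrable fun v => (1 + v ^ 2) * f v) :
    Integrable (fun p : ℝ × ℝ => f p.2 * f p.1 * (p.2 - p.1) ^ 2) (volume.prod volume) := by
  refine ((hmom.mul_prod hmom).const_mul 2).mono ((hf.comp_snd.mul hf.comp_fst).mul
    ((continuous_snd.sub continuous_fst).pow 2).aestronglyMeasurable)
    <| .of_forall fun p => ?_
  have := sq_sub_le_two_mul_one_add_sq_mul_one_add_sq p.2 p.1
  simp only [norm_mul, Real.norm_of_nonneg (sq_nonneg _), Real.norm_two,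
    Real.norm_of_nonneg (by positivity : (0 : ℝ) ≤ 1 + p.1 ^ 2),
    Real.norm_of_nonneg (by positivity : (0 : ℝ) ≤ 1 + p.2 ^ 2)]
  nlinarith [mul_nonneg (norm_nonneg (f p.1)) (norm_nonneg (f p.2))]

lemma sq_mul_sub_le_integral_sq_sub_mul {C R : ℝ} (c : ℝ) (hf_nonneg : 0 ≤ᵐ[volume] f)
    (hfC : ∀ᵐ v, f v ≤ C) (hf : Integrable f) (hfc : Integrable fun v => (v - c) ^ 2 * f v)
    (hR : 0 ≤ R) :
    R ^ 2 * ((∫ v, f v) - 2 * R * C) ≤ ∫ v, (v - c) ^ 2 * f v := by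
  set I := Set.Icc (c - R) (c + R)
  have hI : MeasurableSet I := measurableSet_Icc
  have hvol : volume.real I = 2 * R := by
    rw [Real.volume_real_Icc_of_le (by linarith)]; ring
  have hind : Integrable (I.indicator fun _ => C) :=
    (integrableOn_const (by simp [I])).integrable_indicator hI
  calc R ^ 2 * ((∫ v, f v) - 2 * R * C)
      = ∫ v, R ^ 2 * (f v - I.indicator (fun _ => C) v) := by
        rw [integral_const_mul, integral_sub hf hind, integral_indicator_const C hI, hvol,
          smul_eq_mul]
    _ ≤ ∫ v, (v - c) ^ 2 * f v := by
      refine integral_mono_ae ((hf.sub hind).const_mul _) hfc ?_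
      filter_upwards [hf_nonneg, hfC] with v hv0 hvC
      by_cases hv : v ∈ I
      · rw [Set.indicator_of_mem hv]
        exact (mul_nonpos_of_nonneg_of_nonpos (sq_nonneg R) (sub_nonpos.2 hvC)).trans
          (mul_nonneg (sq_nonneg _) hv0)
      · rw [Set.indicator_of_notMem hv, sub_zero]
        have hRv : R ^ 2 ≤ (v - c) ^ 2 := by
          simp only [I, Set.mem_Icc, not_and_or, not_le] at hv
          rcases hv with h | h <;> nlinarith
        exact mul_le_mul_of_nonneg_right hRv hv0

lemma pow_three_div_le_integral_sq_sub_mul {C : ℝ} (c : ℝ) (hf_nonneg : 0 ≤ᵐ[volume] f)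
    (hfC : ∀ᵐ v, f v ≤ C) (hC : 0 ≤ C) (hf : Integrable f)
    (hfc : Integrable fun v => (v - c) ^ 2 * f v) :
    (∫ v, f v) ^ 3 / (2 * C + 1) ^ 3 ≤ ∫ v, (v - c) ^ 2 * f v := by
  have hM : 0 ≤ ∫ v, f v := integral_nonneg_of_ae hf_nonneg
  -- this radius `R` makes `M - 2 * R * C = R`
  have key := sq_mul_sub_le_integral_sq_sub_mul (R := (∫ v, f v) / (2 * C + 1)) c hf_nonneg hfC
    hf hfc (by positivity)
  convert key using 1
  field_simp
  ring

end Moments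

/-- If `f : ℝ → [0,∞)` is measurable and bounded with finite second moment, then
`(∫ f)⁴ ≤ (2‖f‖_∞ + 1)³ ∬ f(v) f(w) (v - w)² dv dw`, where `‖f‖_∞` is the essential
supremum of `f`. -/
theorem integral_pow_four_le_of_interaction (f : ℝ → ℝ) (hf : Measurable f)
    (hf_nonneg : ∀ v, 0 ≤ f v) (hf_bdd : eLpNorm f ⊤ volume ≠ ⊤)
    (hf_mom : Integrable (fun v : ℝ => (1 + v ^ 2) * f v)) :
    (∫ v : ℝ, f v) ^ 4
      ≤ (2 * (eLpNorm f ⊤ volume).toReal + 1) ^ 3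
          * ∫ w : ℝ, ∫ v : ℝ, f v * f w * (v - w) ^ 2 := by
  set C := (eLpNorm f ⊤ volume).toReal
  have hC : 0 < 2 * C + 1 := by positivity
  set M := ∫ v, f v
  have hM : 0 ≤ M := integral_nonneg hf_nonneg
  have hfC : ∀ᵐ v, f v ≤ C := by
    filter_upwards [ae_norm_le_toReal_eLpNorm_top hf_bdd] with v hv
    rwa [Real.norm_of_nonneg (hf_nonneg v)] at hv
  have hf_int := integrable_of_integrable_one_add_sq_mul hf.aestronglyMeasurable hf_mom
  have h_inner (w : ℝ) : f w * (M ^ 3 / (2 * C + 1) ^ 3) ≤ ∫ v, f v * f w * (v - w) ^ 2 := by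
    calc f w * (M ^ 3 / (2 * C + 1) ^ 3) ≤ f w * ∫ v, (v - w) ^ 2 * f v := by
          gcongr
          · exact hf_nonneg w
          · exact pow_three_div_le_integral_sq_sub_mul w (.of_forall hf_nonneg) hfC
              ENNReal.toReal_nonneg hf_int (integrable_sq_sub_mul hf.aestronglyMeasurable hf_mom w)
      _ = ∫ v, f v * f w * (v - w) ^ 2 := by
          rw [← integral_const_mul]; congr 1; ext v; ring
  have h_outer := integral_mono_of_nonneg
    (.of_forall fun w => mul_nonneg (hf_nonneg w) (by positivity))
    (integrable_mul_mul_sq_sub_prod hf.aestronglyMeasurable hf_mom).integral_prod_left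
    (.of_forall h_inner)
  calc M ^ 4 = (2 * C + 1) ^ 3 * ∫ w, f w * (M ^ 3 / (2 * C + 1) ^ 3) := by
        rw [integral_mul_const, show ∫ w, f w = M from rfl]; field_simp
    _ ≤ (2 * C + 1) ^ 3 * ∫ w, ∫ v, f v * f w * (v - w) ^ 2 := by gcongr
end

section
/- For every M > 0 there exists a constant C > 0, depending only on M, such that for every measurable function f : ℝ → [0, M] with ∫_ℝ √(1 + v²) f(v) dv < ∞ one has (∫_ℝ f(v) dv)⁷ ≤ C (∫_ℝ∫_ℝ f(v) f(w) (v − w)(v̂ − ŵ) dv dw) (∫_ℝ √(1 + v²) f(v) dv)³, where v̂ = v/√(1 + v²). -/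
/-!
Write `⟨v⟩ = √(1 + v²)`, `I = ∫ f`, `E = ∫ ⟨v⟩ f` and `D` for the interaction integral.
Since `relativisticVelocity v = v̂` has derivative `⟨v⟩⁻³`, the kernel `(v - w)(v̂ - ŵ)` dominates
`(v - w)² / ⟨R⟩³` on `[-R, R]²`. By Chebyshev, `f` keeps mass `A ≥ I / 2` on `[-R, R]` when
`R = 2E / I`. A density bounded by `M` with mass `A` has second moment at least `A³ / (32 M²)` about
every point; integrating this over `w ∈ [-R, R]` against `f w` gives `A⁴ ≤ 32 M² ⟨R⟩³ D`, and
`⟨R⟩ ≤ 2R` turns this into `I⁷ ≤ 2¹⁵ M² D E³`.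
-/

open MeasureTheory Metric Real

lemma setIntegral_compl_le_integral_mul_div {α : Type*} [MeasurableSpace α] {μ : Measure α}
    {g φ : α → ℝ} {s : Set α} {r : ℝ} (hs : MeasurableSet s) (hg : Integrable g μ)
    (hφg : Integrable (fun x => φ x * g x) μ) (hg0 : ∀ x, 0 ≤ g x) (hφ0 : ∀ x, 0 ≤ φ x)
    (hr : 0 < r) (hφs : ∀ x ∉ s, r ≤ φ x) :
    ∫ x in sᶜ, g x ∂μ ≤ (∫ x, φ x * g x ∂μ) / r := by
  calc ∫ x in sᶜ, g x ∂μ ≤ ∫ x in sᶜ, φ x * g x / r ∂μ := by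
        refine setIntegral_mono_on hg.integrableOn (hφg.div_const r).integrableOn hs.compl
          fun x hx => ?_
        rw [le_div_iff₀ hr, mul_comm]
        exact mul_le_mul_of_nonneg_right (hφs x hx) (hg0 x)
    _ ≤ ∫ x, φ x * g x / r ∂μ :=
        setIntegral_le_integral (hφg.div_const r)
          (ae_of_all _ fun x => div_nonneg (mul_nonneg (hφ0 x) (hg0 x)) hr.le)
    _ = (∫ x, φ x * g x ∂μ) / r := integral_div r _

lemma integral_pow_three_le_moment {g : ℝ → ℝ} {M : ℝ} (m : ℝ) (hM : 0 < M)
    (hg0 : ∀ v, 0 ≤ g v) (hgM : ∀ v, g v ≤ M) (hg : Integrable g)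
    (hgm : Integrable fun v => (v - m) ^ 2 * g v) :
    (∫ v, g v) ^ 3 ≤ 32 * M ^ 2 * ∫ v, (v - m) ^ 2 * g v := by
  set A := ∫ v, g v
  set V := ∫ v, (v - m) ^ 2 * g v
  have hV : 0 ≤ V := integral_nonneg fun v => mul_nonneg (sq_nonneg _) (hg0 v)
  rcases (integral_nonneg hg0 : 0 ≤ A).eq_or_lt with hA | hA
  · rw [show A = 0 from hA.symm, zero_pow three_ne_zero]; positivity
  set r := A / (4 * M) with hr_def
  have hr : 0 < r := by positivity
  have hball : ∫ v in closedBall m r, g v ≤ 2 * r * M := by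
    have := norm_setIntegral_le_of_norm_le_const
      (measure_closedBall_lt_top (μ := volume) (x := m) (r := r)) fun v _ => by
        rw [Real.norm_eq_abs, abs_of_nonneg (hg0 v)]; exact hgM v
    rw [Real.volume_real_closedBall hr.le, Real.norm_eq_abs] at this
    linarith [le_abs_self (∫ v in closedBall m r, g v)]
  have htail : ∫ v in (closedBall m r)ᶜ, g v ≤ V / r ^ 2 := by
    refine setIntegral_compl_le_integral_mul_div measurableSet_closedBall hg hgm hg0
      (fun v => sq_nonneg _) (by positivity) fun v hv => ?_
    rw [mem_closedBall, not_le, Real.dist_eq] at hv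
    rw [← sq_abs (v - m)]
    exact pow_le_pow_left₀ hr.le hv.le 2
  have hsplit := integral_add_compl (measurableSet_closedBall (x := m) (ε := r)) hg
  have hAr : A / 2 * r ^ 2 ≤ V := by
    rw [← le_div_iff₀ (by positivity)]
    have : 2 * r * M = A / 2 := by rw [hr_def]; field_simp; ring
    linarith
  calc A ^ 3 = 32 * M ^ 2 * (A / 2 * r ^ 2) := by rw [hr_def]; field_simp; ring
    _ ≤ 32 * M ^ 2 * V := by gcongr

noncomputable def relativisticVelocity (v : ℝ) : ℝ := v / √(1 + v ^ 2)

noncomputable def interactionKernel (v w : ℝ) : ℝ :=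
  (v - w) * (relativisticVelocity v - relativisticVelocity w)

lemma hasDerivAt_relativisticVelocity (x : ℝ) :
    HasDerivAt relativisticVelocity (√(1 + x ^ 2) ^ 3)⁻¹ x := by
  have hs : 0 < √(1 + x ^ 2) := sqrt_pos.2 (by positivity)
  have hsq : √(1 + x ^ 2) ^ 2 = 1 + x ^ 2 := sq_sqrt (by positivity)
  have hden : HasDerivAt (fun v : ℝ => √(1 + v ^ 2)) (x / √(1 + x ^ 2)) x := by
    convert ((hasDerivAt_pow 2 x).const_add 1).sqrt (by positivity) using 1
    field_simp
    ring
  refine ((hasDerivAt_id x).div hden hs.ne').congr_deriv ?_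
  simp only [id]
  field_simp
  nlinarith [hsq]

lemma continuous_relativisticVelocity : Continuous relativisticVelocity :=
  continuous_iff_continuousAt.2 fun x => (hasDerivAt_relativisticVelocity x).continuousAt

lemma abs_relativisticVelocity_le_one (v : ℝ) : |relativisticVelocity v| ≤ 1 := by
  have hs : 0 < √(1 + v ^ 2) := sqrt_pos.2 (by positivity)
  rw [relativisticVelocity, abs_div, abs_of_pos hs, div_le_one hs]
  exact abs_le_sqrt (by linarith)

lemma continuous_interactionKernel : Continuous fun p : ℝ × ℝ => interactionKernel p.1 p.2 := by
  have := continuous_relativisticVelocity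
  unfold interactionKernel
  fun_prop

lemma interactionKernel_comm (v w : ℝ) : interactionKernel v w = interactionKernel w v := by
  unfold interactionKernel; ring

lemma sub_sq_le_mul_interactionKernel {R v w : ℝ} (hv : |v| ≤ R) (hw : |w| ≤ R) :
    (v - w) ^ 2 ≤ √(1 + R ^ 2) ^ 3 * interactionKernel v w := by
  wlog hwv : w ≤ v generalizing v w
  · rw [interactionKernel_comm, ← neg_sub, neg_sq]
    exact this hw hv (le_of_not_ge hwv)
  have hslope :
      (√(1 + R ^ 2) ^ 3)⁻¹ * (v - w) ≤ relativisticVelocity v - relativisticVelocity w := by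
    refine (convex_Icc (-R) R).mul_sub_le_image_sub_of_le_deriv
      continuous_relativisticVelocity.continuousOn
      (fun x _ => (hasDerivAt_relativisticVelocity x).differentiableAt.differentiableWithinAt)
      (fun x hx => ?_) w (abs_le.1 hw) v (abs_le.1 hv) hwv
    rw [interior_Icc] at hx
    rw [(hasDerivAt_relativisticVelocity x).deriv]
    have hx2 : x ^ 2 ≤ R ^ 2 := sq_le_sq' hx.1.le hx.2.le
    gcongr
  calc (v - w) ^ 2 = √(1 + R ^ 2) ^ 3 * ((√(1 + R ^ 2) ^ 3)⁻¹ * (v - w) * (v - w)) := by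
        field_simp
    _ ≤ √(1 + R ^ 2) ^ 3 * ((relativisticVelocity v - relativisticVelocity w) * (v - w)) := by
        gcongr
    _ = √(1 + R ^ 2) ^ 3 * interactionKernel v w := by rw [interactionKernel]; ring

lemma interactionKernel_nonneg (v w : ℝ) : 0 ≤ interactionKernel v w := by
  have hK : 0 < √(1 + max |v| |w| ^ 2) ^ 3 := pow_pos (sqrt_pos.2 (by positivity)) 3
  refine (mul_nonneg_iff_of_pos_left hK).1 ((sq_nonneg (v - w)).trans ?_)
  exact sub_sq_le_mul_interactionKernel (le_max_left _ _) (le_max_right _ _)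

lemma interactionKernel_le (v w : ℝ) :
    interactionKernel v w ≤ 4 * √(1 + v ^ 2) * √(1 + w ^ 2) := by
  have hv : |v| ≤ √(1 + v ^ 2) := abs_le_sqrt (by linarith)
  have hw : |w| ≤ √(1 + w ^ 2) := abs_le_sqrt (by linarith)
  have hv1 : 1 ≤ √(1 + v ^ 2) := one_le_sqrt.2 (by nlinarith)
  have hw1 : 1 ≤ √(1 + w ^ 2) := one_le_sqrt.2 (by nlinarith)
  have hvw : |v - w| ≤ |v| + |w| := abs_sub _ _
  have hvel : |relativisticVelocity v - relativisticVelocity w| ≤ 2 := by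
    linarith [abs_sub (relativisticVelocity v) (relativisticVelocity w),
      abs_relativisticVelocity_le_one v, abs_relativisticVelocity_le_one w]
  calc interactionKernel v w ≤ |v - w| * |relativisticVelocity v - relativisticVelocity w| := by
        rw [interactionKernel, ← abs_mul]; exact le_abs_self _
    _ ≤ (√(1 + v ^ 2) + √(1 + w ^ 2)) * 2 := by gcongr; linarith
    _ ≤ 4 * √(1 + v ^ 2) * √(1 + w ^ 2) := by nlinarith

lemma integrable_of_integrable_sqrt_one_add_sq_mul {f : ℝ → ℝ} (hf : AEStronglyMeasurable f)
    (hE : Integrable fun v => √(1 + v ^ 2) * f v) : Integrable f := by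
  refine hE.mono hf (ae_of_all _ fun v => ?_)
  rw [norm_mul, Real.norm_of_nonneg (sqrt_nonneg _)]
  exact le_mul_of_one_le_left (norm_nonneg _) (one_le_sqrt.2 (by nlinarith))

lemma integrable_mul_interactionKernel {f : ℝ → ℝ} (hf : Measurable f) (h0 : ∀ v, 0 ≤ f v)
    (hE : Integrable fun v => √(1 + v ^ 2) * f v) (w : ℝ) :
    Integrable fun v => f v * interactionKernel v w := by
  refine (hE.const_mul (4 * √(1 + w ^ 2))).mono (hf.aestronglyMeasurable.mul
    (continuous_interactionKernel.comp (continuous_id.prodMk continuous_const)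
      ).aestronglyMeasurable) (ae_of_all _ fun v => ?_)
  rw [Real.norm_of_nonneg (mul_nonneg (h0 v) (interactionKernel_nonneg v w)),
    Real.norm_of_nonneg (by have := h0 v; positivity)]
  nlinarith [mul_le_mul_of_nonneg_left (interactionKernel_le v w) (h0 v)]

lemma integrable_interaction {f : ℝ → ℝ} (hf : Measurable f) (h0 : ∀ v, 0 ≤ f v)
    (hE : Integrable fun v => √(1 + v ^ 2) * f v) :
    Integrable (fun p : ℝ × ℝ => f p.2 * f p.1 * interactionKernel p.2 p.1)
      (volume.prod volume) := by
  refine ((hE.mul_prod hE).const_mul 4).mono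
    (((hf.comp measurable_snd).mul (hf.comp measurable_fst)).aestronglyMeasurable.mul
      (continuous_interactionKernel.comp continuous_swap).aestronglyMeasurable)
    (ae_of_all _ fun p => ?_)
  have hff := mul_nonneg (h0 p.2) (h0 p.1)
  rw [Real.norm_of_nonneg (mul_nonneg hff (interactionKernel_nonneg _ _)),
    Real.norm_of_nonneg (by have := h0 p.1; have := h0 p.2; positivity)]
  nlinarith [mul_le_mul_of_nonneg_left (interactionKernel_le p.2 p.1) hff]

lemma setIntegral_closedBall_pow_three_le_integral_mul_interactionKernel {f : ℝ → ℝ}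
    {M R w : ℝ} (hM : 0 < M) (hf : Measurable f) (h0 : ∀ v, 0 ≤ f v) (h1 : ∀ v, f v ≤ M)
    (hE : Integrable fun v => √(1 + v ^ 2) * f v) (hw : |w| ≤ R) :
    (∫ v in closedBall 0 R, f v) ^ 3
      ≤ 32 * M ^ 2 * √(1 + R ^ 2) ^ 3 * ∫ v, f v * interactionKernel v w := by
  set J := closedBall (0 : ℝ) R
  have hfi := integrable_of_integrable_sqrt_one_add_sq_mul hf.aestronglyMeasurable hE
  have hmoment : Integrable fun v => (v - w) ^ 2 * J.indicator f v :=
    ((hfi.integrableOn.continuousOn_mul (by fun_prop) (isCompact_closedBall 0 R)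
      ).integrable_indicator measurableSet_closedBall).congr
      (ae_of_all _ fun v => Set.indicator_mul_right _ _ _)
  have hpointwise : ∀ v, (v - w) ^ 2 * J.indicator f v
      ≤ √(1 + R ^ 2) ^ 3 * (f v * interactionKernel v w) := by
    intro v
    by_cases hv : v ∈ J
    · rw [Set.indicator_of_mem hv, mul_left_comm, mul_comm]
      gcongr
      · exact h0 v
      · rw [mem_closedBall_zero_iff, Real.norm_eq_abs] at hv
        exact sub_sq_le_mul_interactionKernel hv hw
    · rw [Set.indicator_of_notMem hv, mul_zero]
      have := mul_nonneg (h0 v) (interactionKernel_nonneg v w)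
      positivity
  calc (∫ v in J, f v) ^ 3 = (∫ v, J.indicator f v) ^ 3 := by
        rw [integral_indicator measurableSet_closedBall]
    _ ≤ 32 * M ^ 2 * ∫ v, (v - w) ^ 2 * J.indicator f v :=
        integral_pow_three_le_moment w hM (Set.indicator_nonneg fun v _ => h0 v)
          (Set.indicator_le' (fun v _ => h1 v) fun _ _ => hM.le)
          (hfi.indicator measurableSet_closedBall) hmoment
    _ ≤ 32 * M ^ 2 * ∫ v, √(1 + R ^ 2) ^ 3 * (f v * interactionKernel v w) := by
        refine mul_le_mul_of_nonneg_left (integral_mono hmoment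
          ((integrable_mul_interactionKernel hf h0 hE w).const_mul _) hpointwise) (by positivity)
    _ = 32 * M ^ 2 * √(1 + R ^ 2) ^ 3 * ∫ v, f v * interactionKernel v w := by
        rw [integral_const_mul]; ring

lemma setIntegral_closedBall_pow_four_le_interaction {f : ℝ → ℝ} {M : ℝ} (hM : 0 < M)
    (hf : Measurable f) (h0 : ∀ v, 0 ≤ f v) (h1 : ∀ v, f v ≤ M)
    (hE : Integrable fun v => √(1 + v ^ 2) * f v) (R : ℝ) :
    (∫ v in closedBall 0 R, f v) ^ 4
      ≤ 32 * M ^ 2 * √(1 + R ^ 2) ^ 3 * ∫ w, ∫ v, f v * f w * interactionKernel v w := by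
  set J := closedBall (0 : ℝ) R
  set A := ∫ v in J, f v
  have hfi := integrable_of_integrable_sqrt_one_add_sq_mul hf.aestronglyMeasurable hE
  have hpointwise : ∀ w, A ^ 3 * J.indicator f w
      ≤ 32 * M ^ 2 * √(1 + R ^ 2) ^ 3 * ∫ v, f v * f w * interactionKernel v w := by
    intro w
    have hinner : ∫ v, f v * f w * interactionKernel v w
        = f w * ∫ v, f v * interactionKernel v w := by
      rw [← integral_const_mul]; congr with v; ring
    rw [hinner, mul_left_comm, mul_comm (A ^ 3)]
    by_cases hw : w ∈ J
    · rw [Set.indicator_of_mem hw]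
      rw [mem_closedBall_zero_iff, Real.norm_eq_abs] at hw
      exact mul_le_mul_of_nonneg_left
        (setIntegral_closedBall_pow_three_le_integral_mul_interactionKernel hM hf h0 h1 hE hw)
        (h0 w)
    · rw [Set.indicator_of_notMem hw, zero_mul]
      have : 0 ≤ ∫ v, f v * interactionKernel v w :=
        integral_nonneg fun v => mul_nonneg (h0 v) (interactionKernel_nonneg v w)
      have := h0 w
      positivity
  calc A ^ 4 = ∫ w, A ^ 3 * J.indicator f w := by
        rw [integral_const_mul, integral_indicator measurableSet_closedBall]; ring
    _ ≤ ∫ w, 32 * M ^ 2 * √(1 + R ^ 2) ^ 3 * ∫ v, f v * f w * interactionKernel v w :=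
        integral_mono ((hfi.indicator measurableSet_closedBall).const_mul _)
          ((integrable_interaction hf h0 hE).integral_prod_left.const_mul _) hpointwise
    _ = 32 * M ^ 2 * √(1 + R ^ 2) ^ 3 * ∫ w, ∫ v, f v * f w * interactionKernel v w :=
        integral_const_mul _ _

lemma integral_le_setIntegral_closedBall_add {f : ℝ → ℝ} (hf : Measurable f) (h0 : ∀ v, 0 ≤ f v)
    (hE : Integrable fun v => √(1 + v ^ 2) * f v) {R : ℝ} (hR : 0 < R) :
    ∫ v, f v ≤ (∫ v in closedBall 0 R, f v) + (∫ v, √(1 + v ^ 2) * f v) / R := by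
  have hfi := integrable_of_integrable_sqrt_one_add_sq_mul hf.aestronglyMeasurable hE
  have htail : ∫ v in (closedBall 0 R)ᶜ, f v ≤ (∫ v, √(1 + v ^ 2) * f v) / R := by
    refine setIntegral_compl_le_integral_mul_div measurableSet_closedBall hfi hE h0
      (fun v => sqrt_nonneg _) hR fun v hv => ?_
    rw [mem_closedBall_zero_iff, Real.norm_eq_abs, not_le] at hv
    exact hv.le.trans (abs_le_sqrt (by linarith))
  exact (integral_add_compl measurableSet_closedBall hfi).symm.le.trans (add_le_add le_rfl htail)

/-- For every `M > 0` there is a constant `C > 0` depending only on `M` such that every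
measurable `f : ℝ → [0, M]` with finite relativistic energy satisfies
`(∫ f)⁷ ≤ C (∬ f(v) f(w) (v - w)(v̂ - ŵ) dv dw) (∫ √(1 + v²) f(v) dv)³`,
where `v̂ = v / √(1 + v²)`. -/
theorem integral_pow_seven_le_of_relativistic_interaction (M : ℝ) (hM : 0 < M) :
    ∃ C : ℝ, 0 < C ∧
      ∀ f : ℝ → ℝ, Measurable f → (∀ v, 0 ≤ f v) → (∀ v, f v ≤ M) →
        Integrable (fun v : ℝ => Real.sqrt (1 + v ^ 2) * f v) →
        (∫ v : ℝ, f v) ^ 7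
          ≤ C * (∫ w : ℝ, ∫ v : ℝ, f v * f w
                  * ((v - w) * (v / Real.sqrt (1 + v ^ 2) - w / Real.sqrt (1 + w ^ 2))))
              * (∫ v : ℝ, Real.sqrt (1 + v ^ 2) * f v) ^ 3 := by
  refine ⟨32768 * M ^ 2, by positivity, fun f hf h0 h1 hE => ?_⟩
  change _ ≤ _ * (∫ w, ∫ v, f v * f w * interactionKernel v w) * _
  set I := ∫ v, f v
  set E := ∫ v, √(1 + v ^ 2) * f v
  set D := ∫ w, ∫ v, f v * f w * interactionKernel v w
  have hD : 0 ≤ D := integral_nonneg fun w => integral_nonneg fun v =>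
    mul_nonneg (mul_nonneg (h0 v) (h0 w)) (interactionKernel_nonneg v w)
  have hE0 : 0 ≤ E := integral_nonneg fun v => mul_nonneg (sqrt_nonneg _) (h0 v)
  obtain hI | hI : 0 = I ∨ 0 < I := (integral_nonneg h0).eq_or_lt
  · rw [← hI, zero_pow (by norm_num)]; positivity
  have hIE : I ≤ E := integral_mono
    (integrable_of_integrable_sqrt_one_add_sq_mul hf.aestronglyMeasurable hE) hE
    fun v => le_mul_of_one_le_left (h0 v) (one_le_sqrt.2 (by nlinarith))
  set R := 2 * E / I with hR
  have hR2 : 2 ≤ R := by rw [hR, le_div_iff₀ hI]; linarith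
  have hmass : I / 2 ≤ ∫ v in closedBall 0 R, f v := by
    have hER : E / R = I / 2 := by rw [hR]; field_simp [(hI.trans_le hIE).ne']
    have : I ≤ (∫ v in closedBall 0 R, f v) + E / R :=
      integral_le_setIntegral_closedBall_add hf h0 hE (by positivity)
    rw [hER] at this
    linarith
  have hsqrt : √(1 + R ^ 2) ≤ 2 * R := sqrt_le_iff.2 ⟨by positivity, by nlinarith⟩
  calc I ^ 7 = 16 * I ^ 3 * (I / 2) ^ 4 := by ring
    _ ≤ 16 * I ^ 3 * (32 * M ^ 2 * (2 * R) ^ 3 * D) := by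
        gcongr
        exact (pow_le_pow_left₀ (by positivity) hmass 4).trans
          ((setIntegral_closedBall_pow_four_le_interaction hM hf h0 h1 hE R).trans (by gcongr))
    _ = 32768 * M ^ 2 * D * E ^ 3 := by rw [hR]; field_simp [hI.ne']; ring
end
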